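/- Let q be a prime with q ≡ 1 or 23 (mod 24) (i.e. q ≡ ±1 (mod 24)). Then the number of integers m with 4 ≤ m ≤ q−1 such that (m/q) ≠ ((m+1)/q) is exactly (q+1)/2. In particular, there exists an integer m with 4 ≤ m ≤ q−2 such that (m/q) ≠ ((m+1)/q). -/
import Mathlib

open Finset

lemma key_sum (q : ℕ) [Fact q.Prime] (hq2 : q ≠ 2) :
    ∑ x : ZMod q, quadraticChar (ZMod q) x * quadraticChar (ZMod q) (x + 1) = -1 := by
  have hchar : ringChar (ZMod q) ≠ 2 := (ZMod.ringChar_zmod_n q).substr hq2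
  have hne1 : quadraticChar (ZMod q) ≠ 1 := quadraticChar_ne_one hchar
  have hj := jacobiSum_nontrivial_inv hne1
  rw [(quadraticChar_isQuadratic (ZMod q)).inv] at hj
  have hneg : ∑ x : ZMod q, quadraticChar (ZMod q) x * quadraticChar (ZMod q) (x + 1)
      = ∑ x : ZMod q, quadraticChar (ZMod q) (-x) * quadraticChar (ZMod q) (1 - x) := by
    refine Fintype.sum_equiv (Equiv.neg (ZMod q)) _ _ fun x => ?_
    simp [Equiv.neg_apply, sub_eq_add_neg, add_comm]
  have hm1 : (quadraticChar (ZMod q)) (-1) * (quadraticChar (ZMod q)) (-1) = 1 := by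
    rw [← sq]
    exact quadraticChar_sq_one (by
      intro h
      have : (1 : ZMod q) = 0 := by linear_combination -h
      simp at this)
  calc ∑ x : ZMod q, quadraticChar (ZMod q) x * quadraticChar (ZMod q) (x + 1)
      = ∑ x : ZMod q, quadraticChar (ZMod q) (-1) *
          (quadraticChar (ZMod q) x * quadraticChar (ZMod q) (1 - x)) := by
        rw [hneg]; refine Finset.sum_congr rfl fun x _ => ?_
        rw [show (-x : ZMod q) = -1 * x by ring, map_mul]; ring
    _ = quadraticChar (ZMod q) (-1) * jacobiSum (quadraticChar (ZMod q)) (quadraticChar (ZMod q)) := by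
        rw [jacobiSum, Finset.mul_sum]
    _ = -1 := by rw [hj]; rw [← hm1]; ring

lemma interval_sum (q : ℕ) [Fact q.Prime] (hq2 : q ≠ 2) (hq5 : 5 ≤ q) :
    ∑ m ∈ Finset.Icc 1 (q - 2),
      quadraticChar (ZMod q) (m : ZMod q) * quadraticChar (ZMod q) ((m : ZMod q) + 1) = -1 := by
  have hks := key_sum q hq2
  set f : ℕ → ℤ := fun m => quadraticChar (ZMod q) (m : ZMod q) *
    quadraticChar (ZMod q) ((m : ZMod q) + 1) with hf
  have hrange : ∑ m ∈ Finset.range q, f m = -1 := by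
    rw [← hks]
    refine Finset.sum_nbij' (i := fun m : ℕ => ((m : ZMod q)))
      (j := fun x : ZMod q => x.val) ?_ ?_ ?_ ?_ ?_
    · intro a _; exact Finset.mem_univ _
    · intro x _; exact Finset.mem_range.mpr (ZMod.val_lt x)
    · intro a ha; exact ZMod.val_natCast_of_lt (Finset.mem_range.mp ha)
    · intro x _; exact ZMod.natCast_zmod_val x
    · intro a _; rfl
  have h0 : f 0 = 0 := by simp [hf]
  have hlast : f (q - 1) = 0 := by
    have : ((q - 1 : ℕ) : ZMod q) + 1 = 0 := by
      have : ((q - 1 : ℕ) : ZMod q) = (q : ZMod q) - 1 := by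
        push_cast [Nat.cast_sub (by omega : 1 ≤ q)]; ring
      rw [this, ZMod.natCast_self]; ring
    simp [hf, this]
  have hsplit : Finset.range q = insert 0 (Finset.Icc 1 (q - 1)) := by
    ext m; simp [Finset.mem_range, Finset.mem_Icc, Finset.mem_insert]; omega
  have hsplit2 : Finset.Icc 1 (q - 1) = insert (q - 1) (Finset.Icc 1 (q - 2)) := by
    ext m; simp [Finset.mem_Icc, Finset.mem_insert]; omega
  rw [hsplit, Finset.sum_insert (by simp), hsplit2,
    Finset.sum_insert (by simp [Finset.mem_Icc]; omega), h0, hlast] at hrange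
  simpa using hrange

lemma count_lemma (q : ℕ) [Fact q.Prime] (hq2 : q ≠ 2) (hq5 : 5 ≤ q) :
    ((Finset.Icc 1 (q - 2)).filter
        (fun m : ℕ => legendreSym q (m : ℤ) ≠ legendreSym q ((m : ℤ) + 1))).card = (q - 1) / 2 := by
  have hsum := interval_sum q hq2 hq5
  set P : ℕ → Prop := fun m : ℕ => legendreSym q (m : ℤ) ≠ legendreSym q ((m : ℤ) + 1) with hPdef
  have hleg : ∀ m : ℕ, legendreSym q (m : ℤ) = quadraticChar (ZMod q) (m : ZMod q) := by
    intro m; rw [legendreSym]; push_cast; rfl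
  have hleg1 : ∀ m : ℕ, legendreSym q ((m : ℤ) + 1) = quadraticChar (ZMod q) ((m : ZMod q) + 1) := by
    intro m; rw [legendreSym]; push_cast; rfl
  have hterm : ∀ m ∈ Finset.Icc 1 (q - 2),
      quadraticChar (ZMod q) (m : ZMod q) * quadraticChar (ZMod q) ((m : ZMod q) + 1)
        = if P m then (-1 : ℤ) else 1 := by
    intro m hm
    rw [Finset.mem_Icc] at hm
    have hm0 : (m : ZMod q) ≠ 0 := by
      rw [Ne, ZMod.natCast_eq_zero_iff]
      intro h
      have := Nat.le_of_dvd (by omega) h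
      omega
    have hm1 : ((m : ZMod q) + 1) ≠ 0 := by
      have : ((m : ZMod q) + 1) = ((m + 1 : ℕ) : ZMod q) := by push_cast; ring
      rw [this, Ne, ZMod.natCast_eq_zero_iff]
      intro h
      have := Nat.le_of_dvd (by omega) h
      omega
    have d0 := quadraticChar_dichotomy hm0
    have d1 := quadraticChar_dichotomy hm1
    simp only [hPdef, hleg, hleg1]
    rcases d0 with h0 | h0 <;> rcases d1 with h1 | h1 <;>
      rw [h0, h1] <;> norm_num
  rw [Finset.sum_congr rfl hterm] at hsum
  rw [Finset.sum_ite, Finset.sum_const, Finset.sum_const] at hsum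
  have hcards : ((Finset.Icc 1 (q - 2)).filter P).card
      + ((Finset.Icc 1 (q - 2)).filter (fun m => ¬ P m)).card = q - 2 := by
    rw [Finset.card_filter_add_card_filter_not, Nat.card_Icc]
    omega
  set a := ((Finset.Icc 1 (q - 2)).filter P).card
  set b := ((Finset.Icc 1 (q - 2)).filter (fun m => ¬ P m)).card
  simp only [nsmul_eq_mul, mul_neg, mul_one] at hsum
  have : (a : ℤ) * (-1) + b = -1 := by simpa using hsum
  omega

lemma leg_two (q : ℕ) [Fact q.Prime] (hq : q % 24 = 1 ∨ q % 24 = 23) (hq5 : 23 ≤ q) :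
    legendreSym q (2 : ℤ) = 1 := by
  have h2 : ((2 : ℤ) : ZMod q) ≠ 0 := by
    rw [show ((2 : ℤ) : ZMod q) = ((2 : ℕ) : ZMod q) by push_cast; ring,
      Ne, ZMod.natCast_eq_zero_iff]
    intro h; have := Nat.le_of_dvd (by norm_num) h; omega
  rw [legendreSym.eq_one_iff q h2]
  have : IsSquare (2 : ZMod q) := (ZMod.exists_sq_eq_two_iff (by omega)).mpr (by omega)
  simpa using this

lemma leg_three (q : ℕ) [Fact q.Prime] (hq : q % 24 = 1 ∨ q % 24 = 23) (hq5 : 23 ≤ q) :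
    legendreSym q (3 : ℤ) = 1 := by
  haveI : Fact (Nat.Prime 3) := ⟨by norm_num⟩
  have hq2 : q ≠ 2 := by omega
  rcases hq with h | h
  · have h4 : q % 4 = 1 := by omega
    have := legendreSym.quadratic_reciprocity_one_mod_four (p := q) (q := 3) h4 (by norm_num)
    push_cast at this
    rw [← this, legendreSym.mod]
    rw [show ((q : ℤ) % ((3:ℕ) : ℤ)) = 1 by push_cast; omega, legendreSym.at_one]
  · have h4 : q % 4 = 3 := by omega
    have := legendreSym.quadratic_reciprocity_three_mod_four (p := q) (q := 3) h4 (by norm_num)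
    push_cast at this
    have h' : legendreSym q (3 : ℤ) = -legendreSym 3 (q : ℤ) := by
      rw [this]; ring
    rw [h', legendreSym.mod]
    have h32 : legendreSym 3 (2 : ℤ) = -1 := by
      rw [legendreSym.eq_neg_one_iff]
      norm_num
      rw [ZMod.exists_sq_eq_two_iff (by norm_num)]
      norm_num
    rw [show ((q : ℤ) % ((3:ℕ) : ℤ)) = 2 by push_cast; omega, h32]
    norm_num

lemma leg_four (q : ℕ) [Fact q.Prime] (hq5 : 23 ≤ q) :
    legendreSym q (4 : ℤ) = 1 := by
  have h2 : ((2 : ℤ) : ZMod q) ≠ 0 := by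
    rw [show ((2 : ℤ) : ZMod q) = ((2 : ℕ) : ZMod q) by push_cast; ring,
      Ne, ZMod.natCast_eq_zero_iff]
    intro h; have := Nat.le_of_dvd (by norm_num) h; omega
  rw [show (4 : ℤ) = 2 ^ 2 by norm_num]
  exact legendreSym.sq_one' q h2

theorem legendre_consecutive_count (q : ℕ) [Fact q.Prime]
    (hq : q % 24 = 1 ∨ q % 24 = 23) :
    ((Finset.Icc 4 (q - 1)).filter
        (fun m : ℕ => legendreSym q (m : ℤ) ≠ legendreSym q ((m : ℤ) + 1))).card = (q + 1) / 2 ∧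
      ∃ m : ℕ, 4 ≤ m ∧ m ≤ q - 2 ∧ legendreSym q (m : ℤ) ≠ legendreSym q ((m : ℤ) + 1) := by
  have hprime : q.Prime := Fact.out
  have hq5 : 23 ≤ q := by
    have := hprime.two_le
    omega
  have hq2 : q ≠ 2 := by omega
  have hcount := count_lemma q hq2 (by omega)
  have hsmall : ∀ m : ℕ, m ∈ Finset.Icc 1 3 →
      ¬ (legendreSym q (m : ℤ) ≠ legendreSym q ((m : ℤ) + 1)) := by
    intro m hm
    rw [Finset.mem_Icc] at hm
    obtain ⟨h1, h2⟩ := hm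
    simp only [ne_eq, not_not]
    interval_cases m
    · norm_num [legendreSym.at_one, leg_two q hq hq5]
    · norm_num [leg_two q hq hq5, leg_three q hq hq5]
    · norm_num [leg_three q hq hq5, leg_four q hq5]
  have hsplit : Finset.Icc 1 (q - 2) = Finset.Icc 1 3 ∪ Finset.Icc 4 (q - 2) := by
    ext m; simp only [Finset.mem_Icc, Finset.mem_union]; omega
  have hdisj : Disjoint (Finset.Icc 1 3) (Finset.Icc 4 (q - 2)) := by
    rw [Finset.disjoint_left]; intro m hm hm'
    simp only [Finset.mem_Icc] at hm hm'; omega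
  have hempty : (Finset.Icc 1 3).filter
      (fun m : ℕ => legendreSym q (m : ℤ) ≠ legendreSym q ((m : ℤ) + 1)) = ∅ := by
    rw [Finset.filter_eq_empty_iff]; exact fun x hx => hsmall x hx
  have hA : ((Finset.Icc 4 (q - 2)).filter
      (fun m : ℕ => legendreSym q (m : ℤ) ≠ legendreSym q ((m : ℤ) + 1))).card = (q - 1) / 2 := by
    rw [hsplit, Finset.filter_union, Finset.card_union_of_disjoint
      (hdisj.mono (Finset.filter_subset _ _) (Finset.filter_subset _ _)), hempty] at hcount
    simpa using hcount
  have hPq1 : legendreSym q ((q - 1 : ℕ) : ℤ) ≠ legendreSym q (((q - 1 : ℕ) : ℤ) + 1) := by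
    have hcast : (((q - 1 : ℕ) : ℤ) + 1) = ((q : ℕ) : ℤ) := by
      push_cast [Nat.cast_sub (by omega : 1 ≤ q)]; ring
    rw [hcast]
    have hz : legendreSym q ((q : ℕ) : ℤ) = 0 := by
      rw [legendreSym.eq_zero_iff]
      push_cast
      exact ZMod.natCast_self q
    have hnz0 : (((q - 1 : ℕ) : ℤ) : ZMod q) ≠ 0 := by
      push_cast
      rw [Ne, ZMod.natCast_eq_zero_iff]
      intro h
      have := Nat.le_of_dvd (by omega) h
      omega
    intro h
    rw [hz] at h
    exact hnz0 ((legendreSym.eq_zero_iff q _).mp h)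
  have hsplit2 : Finset.Icc 4 (q - 1) = insert (q - 1) (Finset.Icc 4 (q - 2)) := by
    ext m; simp only [Finset.mem_Icc, Finset.mem_insert]; omega
  have hnotmem : q - 1 ∉ Finset.Icc 4 (q - 2) := by
    simp only [Finset.mem_Icc]; omega
  constructor
  · rw [hsplit2, Finset.filter_insert, if_pos hPq1,
      Finset.card_insert_of_notMem (fun h => hnotmem (Finset.filter_subset _ _ h)), hA]
    omega
  · have hne : ((Finset.Icc 4 (q - 2)).filter
        (fun m : ℕ => legendreSym q (m : ℤ) ≠ legendreSym q ((m : ℤ) + 1))).Nonempty := by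
      rw [← Finset.card_pos, hA]; omega
    obtain ⟨m, hm⟩ := hne
    rw [Finset.mem_filter, Finset.mem_Icc] at hm
    exact ⟨m, hm.1.1, hm.1.2, hm.2⟩
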